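/- Let A• be a graded-commutative differential graded algebra over a commutative ring, with differential d of degree +1, and let φ: A• → A• be a morphism of graded algebras commuting with d (i.e., φ(ab) = φ(a)φ(b) and dφ = φd). Define the complex S• by S^j = A^j ⊕ A^{j−1} with differential d_S(x, y) = (dx, (1−φ)(x) − dy). Then the pairing ⟨(x,y), (x',y')⟩ := (x x', (−1)^j x y' + y φ(x')) for (x,y) ∈ S^j, (x',y') ∈ S^{j'} satisfies the Leibniz relation d_S⟨s, s'⟩ = ⟨d_S s, s'⟩ + (−1)^j ⟨s, d_S s'⟩, and hence defines a morphism of complexes Tot(S• ⊗ S•) → S•. -/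

import Mathlib

/-!
The first component is the Leibniz rule of `A`. For the second, expand `d` of
`(-1)^j x y' + y φ(x')` by the Leibniz rule and pull `φ` through the products: the telescoping
`(1-φ)(x x') = (1-φ)(x) φ(x') + x (1-φ)(x')` cancels the cross terms `x φ(x')` of
`⟨d_S s, s'⟩` and `⟨s, d_S s'⟩`, and `(-1)^{j-1} = -(-1)^j`, `(-1)^j (-1)^j = 1` match the rest.
-/

/-- The sign `(-1)^i` for `i : ℤ`. -/
def sgn (i : ℤ) : ℤ := ((Int.negOnePow i : ℤˣ) : ℤ)

/-- Transport along an equality of degrees. -/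
def gcast {R : Type*} [Semiring R] {A : ℤ → Type*} [∀ i, AddCommGroup (A i)]
    [∀ i, Module R (A i)] {i j : ℤ} (h : i = j) : A i →ₗ[R] A j :=
  h ▸ (LinearMap.id : A i →ₗ[R] A i)

lemma sgn_add_one (i : ℤ) : sgn (i + 1) = -sgn i := by
  simp [sgn, Int.negOnePow_succ]

lemma sgn_sub_one (i : ℤ) : sgn (i - 1) = -sgn i := by
  rw [← neg_neg (sgn (i - 1)), ← sgn_add_one, sub_add_cancel]

lemma sgn_smul_sgn_smul {M : Type*} [AddCommGroup M] (i : ℤ) (z : M) :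
    sgn i • sgn i • z = z := by
  rw [smul_smul, sgn, ← Units.val_mul, Int.units_mul_self, Units.val_one, one_smul]

section GradedProduct

variable {R : Type*} [CommRing R] {A : ℤ → Type*} [∀ i, AddCommGroup (A i)]
  [∀ i, Module R (A i)] (mul : ∀ i j k : ℤ, i + j = k → (A i →ₗ[R] (A j →ₗ[R] A k)))

lemma mul_gcast_left {i' i j k : ℤ} (e : i' = i) (h : i + j = k) (h' : i' + j = k)
    (a : A i') (b : A j) :
    mul i j k h (gcast (R := R) (A := A) e a) b = mul i' j k h' a b := by
  subst e; rfl

lemma mul_gcast_right {j' i j k : ℤ} (e : j' = j) (h : i + j = k) (h' : i + j' = k)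
    (a : A i) (b : A j') :
    mul i j k h a (gcast (R := R) (A := A) e b) = mul i j' k h' a b := by
  subst e; rfl

lemma gcast_d_mul (d : ∀ i : ℤ, A i →ₗ[R] A (i + 1))
    (hleib : ∀ (i j k : ℤ) (h : i + j = k) (h₁ : i + 1 + j = k + 1)
      (h₂ : i + (j + 1) = k + 1) (a : A i) (b : A j),
      d k (mul i j k h a b) =
        mul (i + 1) j (k + 1) h₁ (d i a) b + sgn i • mul i (j + 1) (k + 1) h₂ a (d j b))
    {i j k₀ k : ℤ} (e : k₀ + 1 = k) (h : i + j = k₀) (a : A i) (b : A j) :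
    gcast (R := R) (A := A) e (d k₀ (mul i j k₀ h a b)) =
      mul (i + 1) j k (by omega) (d i a) b + sgn i • mul i (j + 1) k (by omega) a (d j b) := by
  subst e; exact hleib i j k₀ h _ _ a b

end GradedProduct

/-- Let `A•` be a graded-commutative DGA over a commutative ring, with a multiplicative
endomorphism `φ` commuting with `d`.  On the shifted cone `S• = Cone(1-φ)[-1]`, whose
degree `j` part is `A^j ⊕ A^{j-1}` with differential `d_S(x,y) = (dx, (1-φ)x - dy)`,
the pairing `⟨(x,y),(x',y')⟩ = (xx', (-1)^j x y' + y φ(x'))` satisfies the Leibniz rule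
`d_S⟨s,s'⟩ = ⟨d_S s, s'⟩ + (-1)^j ⟨s, d_S s'⟩` (stated componentwise below), and hence
defines a morphism of complexes `Tot(S• ⊗ S•) → S•`. -/
theorem syntomic_cone_product_leibniz
    {R : Type*} [CommRing R] (A : ℤ → Type*)
    [∀ i, AddCommGroup (A i)] [∀ i, Module R (A i)]
    (mul : ∀ i j k : ℤ, i + j = k → (A i →ₗ[R] (A j →ₗ[R] A k)))
    (d : ∀ i : ℤ, A i →ₗ[R] A (i + 1))
    (hleib : ∀ (i j k : ℤ) (h : i + j = k) (a : A i) (b : A j),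
      d k (mul i j k h a b) =
        mul (i + 1) j (k + 1) (by omega) (d i a) b +
          sgn i • mul i (j + 1) (k + 1) (by omega) a (d j b))
    (φ : ∀ i : ℤ, A i →ₗ[R] A i)
    (hφmul : ∀ (i j k : ℤ) (h : i + j = k) (a : A i) (b : A j),
      φ k (mul i j k h a b) = mul i j k h (φ i a) (φ j b))
    (hφd : ∀ (i : ℤ) (a : A i), d i (φ i a) = φ (i + 1) (d i a))
    -- elements `s = (x,y) ∈ S^j`, `s' = (x',y') ∈ S^{j'}`
    (j j' k : ℤ) (hk : j + j' = k)
    (x : A j) (y : A (j - 1)) (x' : A j') (y' : A (j' - 1)) :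
    -- `⟨s,s'⟩ = (P₁, P₂) ∈ S^k`
    let P₁ : A k := mul j j' k hk x x'
    let P₂ : A (k - 1) :=
      sgn j • mul j (j' - 1) (k - 1) (by omega) x y' +
        mul (j - 1) j' (k - 1) (by omega) y (φ j' x')
    -- `d_S s = (d x, (1-φ)x - d y) ∈ S^{j+1}` and similarly for `s'`
    let dsx₂ : A j := x - φ j x - gcast (R := R) (A := A) (by omega) (d (j - 1) y)
    let dsx'₂ : A j' := x' - φ j' x' - gcast (R := R) (A := A) (by omega) (d (j' - 1) y')
    -- `⟨d_S s, s'⟩ + (-1)^j ⟨s, d_S s'⟩ = (Q₁, Q₂) ∈ S^{k+1}`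
    let Q₁ : A (k + 1) :=
      mul (j + 1) j' (k + 1) (by omega) (d j x) x' +
        sgn j • mul j (j' + 1) (k + 1) (by omega) x (d j' x')
    let Q₂ : A k :=
      (sgn (j + 1) • mul (j + 1) (j' - 1) k (by omega) (d j x) y' +
          mul j j' k hk dsx₂ (φ j' x')) +
        sgn j •
          (sgn j • mul j j' k hk x dsx'₂ +
            mul (j - 1) (j' + 1) k (by omega) y (φ (j' + 1) (d j' x')))
    -- Leibniz rule `d_S⟨s,s'⟩ = ⟨d_S s, s'⟩ + (-1)^j ⟨s, d_S s'⟩`, componentwise: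
    d k P₁ = Q₁ ∧
      P₁ - φ k P₁ - gcast (R := R) (A := A) (by omega) (d (k - 1) P₂) = Q₂ := by
  intro P₁ P₂ dsx₂ dsx'₂ Q₁ Q₂
  refine ⟨hleib j j' k hk x x', ?_⟩
  have hk₁ : k - 1 + 1 = k := by omega
  simp only [P₁, P₂, dsx₂, dsx'₂, Q₂, map_add, map_zsmul, map_sub, LinearMap.sub_apply,
    hφd, hφmul,
    gcast_d_mul mul d (fun _ _ _ h _ _ => hleib _ _ _ h) hk₁,
    ← mul_gcast_left mul (show j - 1 + 1 = j by omega) hk,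
    ← mul_gcast_right mul (show j' - 1 + 1 = j' by omega) hk]
  simp only [sgn_add_one, sgn_sub_one, smul_add, smul_sub, neg_smul, sgn_smul_sgn_smul]
  abel
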